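/- arXiv:2009.00176 — 3 statements merged into one kernel-verified Lean document; each statement's English description precedes it below -/
import Mathlib

section
/- If C is an instance of an axiom scheme of IQC (i.e., a substitution instance of a theorem of IPC, or an instance of ∀x A → A(y/x), A(y/x) → ∃x A, ∀x(A → B) → (A → ∀x B) with x not free in A, or ∀x(A → B) → (∃x A → B) with x not free in B) and x₁, …, xₙ is the list of free variables of C, then ∀x₁ ⋯ ∀xₙ C^t is provable in Q∘S4.t. -/
/-! ## Propositional intuitionistic formulas and IPC -/

inductive PropForm : Type
  | var : ℕ → PropForm
  | falsum : PropForm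
  | and : PropForm → PropForm → PropForm
  | or : PropForm → PropForm → PropForm
  | impl : PropForm → PropForm → PropForm

/-- Hilbert-style intuitionistic propositional calculus. -/
inductive IPC : PropForm → Prop
  | ax1 (A B : PropForm) : IPC (A.impl (B.impl A))
  | ax2 (A B C : PropForm) : IPC ((A.impl (B.impl C)).impl ((A.impl B).impl (A.impl C)))
  | andE1 (A B : PropForm) : IPC ((A.and B).impl A)
  | andE2 (A B : PropForm) : IPC ((A.and B).impl B)
  | andI (A B : PropForm) : IPC (A.impl (B.impl (A.and B)))
  | orI1 (A B : PropForm) : IPC (A.impl (A.or B))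
  | orI2 (A B : PropForm) : IPC (B.impl (A.or B))
  | orE (A B C : PropForm) : IPC ((A.impl C).impl ((B.impl C).impl ((A.or B).impl C)))
  | exfalso (A : PropForm) : IPC (PropForm.falsum.impl A)
  | mp (A B : PropForm) : IPC (A.impl B) → IPC A → IPC B

/-! ## Bimodal propositional formulas and S4.t -/

inductive BForm : Type
  | var : ℕ → BForm
  | falsum : BForm
  | impl : BForm → BForm → BForm
  | boxF : BForm → BForm
  | boxP : BForm → BForm

def BForm.neg (A : BForm) : BForm := A.impl .falsum
def BForm.diaF (A : BForm) : BForm := (A.neg.boxF).neg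
def BForm.diaP (A : BForm) : BForm := (A.neg.boxP).neg

/-- The tense propositional logic S4.t: classical propositional logic, S4 axioms
for both `boxF` and `boxP`, the two tense axioms, MP and both necessitations. -/
inductive S4t : BForm → Prop
  | ax1 (A B : BForm) : S4t (A.impl (B.impl A))
  | ax2 (A B C : BForm) : S4t ((A.impl (B.impl C)).impl ((A.impl B).impl (A.impl C)))
  | ax3 (A B : BForm) : S4t (((B.neg).impl (A.neg)).impl (A.impl B))
  | kF (A B : BForm) : S4t ((A.impl B).boxF.impl (A.boxF.impl B.boxF))
  | tF (A : BForm) : S4t (A.boxF.impl A)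
  | fourF (A : BForm) : S4t (A.boxF.impl A.boxF.boxF)
  | kP (A B : BForm) : S4t ((A.impl B).boxP.impl (A.boxP.impl B.boxP))
  | tP (A : BForm) : S4t (A.boxP.impl A)
  | fourP (A : BForm) : S4t (A.boxP.impl A.boxP.boxP)
  | tense1 (A : BForm) : S4t (A.impl A.diaF.boxP)
  | tense2 (A : BForm) : S4t (A.impl A.diaP.boxF)
  | mp (A B : BForm) : S4t (A.impl B) → S4t A → S4t B
  | necF (A : BForm) : S4t A → S4t A.boxF
  | necP (A : BForm) : S4t A → S4t A.boxP

/-! ## Predicate tense formulas (the language L_T) -/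

/-- Formulas of the bimodal predicate language `L_T`.  The classical basis means
that `⊥, →, ∀, □F, □P` are primitive; the remaining connectives are the usual
classical abbreviations, defined below. -/
inductive TForm : Type
  | falsum : TForm
  | atom : ℕ → List ℕ → TForm
  | impl : TForm → TForm → TForm
  | all : ℕ → TForm → TForm
  | boxF : TForm → TForm
  | boxP : TForm → TForm

def TForm.neg (A : TForm) : TForm := A.impl .falsum
def TForm.and (A B : TForm) : TForm := (A.impl B.neg).neg
def TForm.or (A B : TForm) : TForm := (A.neg).impl B
def TForm.iff (A B : TForm) : TForm := (A.impl B).and (B.impl A)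
def TForm.ex (x : ℕ) (A : TForm) : TForm := (TForm.all x A.neg).neg
def TForm.diaF (A : TForm) : TForm := A.neg.boxF.neg
def TForm.diaP (A : TForm) : TForm := A.neg.boxP.neg

def TForm.freeVars : TForm → Finset ℕ
  | .falsum => ∅
  | .atom _ args => args.toFinset
  | .impl A B => A.freeVars ∪ B.freeVars
  | .all x A => A.freeVars.erase x
  | .boxF A => A.freeVars
  | .boxP A => A.freeVars

/-- Replace every free occurrence of the variable `x` by `y`. -/
def TForm.subst (x y : ℕ) : TForm → TForm
  | .falsum => .falsum
  | .atom p args => .atom p (args.map fun v => if v = x then y else v)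
  | .impl A B => .impl (A.subst x y) (B.subst x y)
  | .all z A => if z = x then .all z A else .all z (A.subst x y)
  | .boxF A => .boxF (A.subst x y)
  | .boxP A => .boxP (A.subst x y)

/-- `y` is substitutable for `x`: no free occurrence of `x` lies in the scope of
a quantifier binding `y`. -/
def TForm.substOK (x y : ℕ) : TForm → Prop
  | .falsum => True
  | .atom _ _ => True
  | .impl A B => A.substOK x y ∧ B.substOK x y
  | .all z A => z = x ∨ ((z = y → x ∉ A.freeVars) ∧ A.substOK x y)
  | .boxF A => A.substOK x y
  | .boxP A => A.substOK x y

/-- Substitution of `L_T`-formulas for the propositional letters of a bimodal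
propositional formula. -/
def BForm.tsubst (s : ℕ → TForm) : BForm → TForm
  | .var n => s n
  | .falsum => .falsum
  | .impl A B => .impl (A.tsubst s) (B.tsubst s)
  | .boxF A => .boxF (A.tsubst s)
  | .boxP A => .boxP (A.tsubst s)

/-! ## The predicate tense logic Q∘S4.t -/

inductive QoS4t : TForm → Prop
  /-- all substitution instances of theorems of S4.t -/
  | s4t (φ : BForm) (s : ℕ → TForm) : S4t φ → QoS4t (φ.tsubst s)
  /-- (UI°)  ∀y(∀x A → A(y/x)) -/
  | ui (x y : ℕ) (A : TForm) (hok : A.substOK x y) :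
      QoS4t (.all y ((TForm.all x A).impl (A.subst x y)))
  /-- ∀x(A → B) → (∀x A → ∀x B) -/
  | distrib (x : ℕ) (A B : TForm) :
      QoS4t ((TForm.all x (A.impl B)).impl ((TForm.all x A).impl (TForm.all x B)))
  /-- ∀x∀y A ↔ ∀y∀x A -/
  | comm (x y : ℕ) (A : TForm) :
      QoS4t ((TForm.all x (TForm.all y A)).iff (TForm.all y (TForm.all x A)))
  /-- A → ∀x A, x not free in A -/
  | vac (x : ℕ) (A : TForm) (h : x ∉ A.freeVars) : QoS4t (A.impl (.all x A))
  /-- (NID)  ∀x A → A, x not free in A -/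
  | nid (x : ℕ) (A : TForm) (h : x ∉ A.freeVars) : QoS4t ((TForm.all x A).impl A)
  /-- (CBF_F)  □F ∀x A → ∀x □F A -/
  | cbfF (x : ℕ) (A : TForm) : QoS4t ((TForm.all x A).boxF.impl (TForm.all x A.boxF))
  | mp (A B : TForm) : QoS4t (A.impl B) → QoS4t A → QoS4t B
  | gen (x : ℕ) (A : TForm) : QoS4t A → QoS4t (.all x A)
  | necF (A : TForm) : QoS4t A → QoS4t A.boxF
  | necP (A : TForm) : QoS4t A → QoS4t A.boxP

/-! ## The language L of intuitionistic predicate logic and IQC -/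

inductive IForm : Type
  | falsum : IForm
  | atom : ℕ → List ℕ → IForm
  | and : IForm → IForm → IForm
  | or : IForm → IForm → IForm
  | impl : IForm → IForm → IForm
  | all : ℕ → IForm → IForm
  | ex : ℕ → IForm → IForm

def IForm.freeVars : IForm → Finset ℕ
  | .falsum => ∅
  | .atom _ args => args.toFinset
  | .and A B => A.freeVars ∪ B.freeVars
  | .or A B => A.freeVars ∪ B.freeVars
  | .impl A B => A.freeVars ∪ B.freeVars
  | .all x A => A.freeVars.erase x
  | .ex x A => A.freeVars.erase x

def IForm.subst (x y : ℕ) : IForm → IForm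
  | .falsum => .falsum
  | .atom p args => .atom p (args.map fun v => if v = x then y else v)
  | .and A B => .and (A.subst x y) (B.subst x y)
  | .or A B => .or (A.subst x y) (B.subst x y)
  | .impl A B => .impl (A.subst x y) (B.subst x y)
  | .all z A => if z = x then .all z A else .all z (A.subst x y)
  | .ex z A => if z = x then .ex z A else .ex z (A.subst x y)

def IForm.substOK (x y : ℕ) : IForm → Prop
  | .falsum => True
  | .atom _ _ => True
  | .and A B => A.substOK x y ∧ B.substOK x y
  | .or A B => A.substOK x y ∧ B.substOK x y
  | .impl A B => A.substOK x y ∧ B.substOK x y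
  | .all z A => z = x ∨ ((z = y → x ∉ A.freeVars) ∧ A.substOK x y)
  | .ex z A => z = x ∨ ((z = y → x ∉ A.freeVars) ∧ A.substOK x y)

/-- Substitution of `L`-formulas for the propositional letters of an
intuitionistic propositional formula. -/
def PropForm.isubst (s : ℕ → IForm) : PropForm → IForm
  | .var n => s n
  | .falsum => .falsum
  | .and A B => .and (A.isubst s) (B.isubst s)
  | .or A B => .or (A.isubst s) (B.isubst s)
  | .impl A B => .impl (A.isubst s) (B.isubst s)

/-- The intuitionistic predicate calculus IQC. -/
inductive IQC : IForm → Prop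
  /-- all substitution instances of theorems of IPC -/
  | ipc (φ : PropForm) (s : ℕ → IForm) : IPC φ → IQC (φ.isubst s)
  /-- (UI)  ∀x A → A(y/x) -/
  | ui (x y : ℕ) (A : IForm) (hok : A.substOK x y) :
      IQC ((IForm.all x A).impl (A.subst x y))
  /-- A(y/x) → ∃x A -/
  | exI (x y : ℕ) (A : IForm) (hok : A.substOK x y) :
      IQC ((A.subst x y).impl (IForm.ex x A))
  /-- ∀x(A → B) → (A → ∀x B), x not free in A -/
  | allImp (x : ℕ) (A B : IForm) (h : x ∉ A.freeVars) :
      IQC ((IForm.all x (A.impl B)).impl (A.impl (IForm.all x B)))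
  /-- ∀x(A → B) → (∃x A → B), x not free in B -/
  | exImp (x : ℕ) (A B : IForm) (h : x ∉ B.freeVars) :
      IQC ((IForm.all x (A.impl B)).impl ((IForm.ex x A).impl B))
  | mp (A B : IForm) : IQC (A.impl B) → IQC A → IQC B
  | gen (x : ℕ) (A : IForm) : IQC A → IQC (.all x A)

/-! ## The temporal Gödel translation -/

def IForm.t : IForm → TForm
  | .falsum => .falsum
  | .atom p args => .boxF (.atom p args)
  | .and A B => TForm.and A.t B.t
  | .or A B => TForm.or A.t B.t
  | .impl A B => .boxF (A.t.impl B.t)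
  | .all x A => .boxF (.all x A.t)
  | .ex x A => TForm.diaP (TForm.ex x A.t)

/-- `closure [x₁,…,xₙ] A = ∀x₁ ⋯ ∀xₙ A`. -/
def TForm.closure (xs : List ℕ) (A : TForm) : TForm := xs.foldr TForm.all A

/-! ## Generalized Kripke semantics for Q∘S4.t -/

/-- A Q∘S4.t-frame: a reflexive transitive relation on a nonempty set of worlds,
a nonempty constant outer domain `U`, and nonempty increasing inner domains. -/
structure TFrame where
  W : Type
  U : Type
  hW : Nonempty W
  hU : Nonempty U
  R : W → W → Prop
  refl : ∀ w, R w w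
  trans : ∀ {u v w}, R u v → R v w → R u w
  D : W → Set U
  Dne : ∀ w, (D w).Nonempty
  Dmono : ∀ {w v}, R w v → D w ⊆ D v

/-- A model based on a Q∘S4.t-frame: interprets each predicate symbol at each
world as a relation on the outer domain. -/
structure TModel (F : TFrame) where
  I : F.W → ℕ → List F.U → Prop

/-- Truth of an `L_T`-formula at a world under an assignment. -/
def TModel.truth {F : TFrame} (M : TModel F) : F.W → (ℕ → F.U) → TForm → Prop
  | _, _, .falsum => False
  | w, σ, .atom p args => M.I w p (args.map σ)
  | w, σ, .impl A B => M.truth w σ A → M.truth w σ B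
  | w, σ, .all x A =>
      ∀ τ : ℕ → F.U, (∀ y, y ≠ x → τ y = σ y) → τ x ∈ F.D w → M.truth w τ A
  | w, σ, .boxF A => ∀ v, F.R w v → M.truth v σ A
  | w, σ, .boxP A => ∀ v, F.R v w → M.truth v σ A

/-- Validity of an `L_T`-formula in a Q∘S4.t-frame. -/
def TFrame.valid (F : TFrame) (A : TForm) : Prop :=
  ∀ M : TModel F, ∀ w : F.W, ∀ σ : ℕ → F.U, M.truth w σ A

/-! ## Kripke semantics for IQC -/

/-- An IQC-frame: a partial order on a nonempty set of worlds with nonempty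
increasing domains. -/
structure IFrame where
  W : Type
  α : Type
  hW : Nonempty W
  R : W → W → Prop
  refl : ∀ w, R w w
  trans : ∀ {u v w}, R u v → R v w → R u w
  antisymm : ∀ {u v}, R u v → R v u → u = v
  D : W → Set α
  Dne : ∀ w, (D w).Nonempty
  Dmono : ∀ {w v}, R w v → D w ⊆ D v

/-- An IQC-model: `I w P ⊆ (D w)ⁿ`, increasing along `R`. -/
structure IModel (F : IFrame) where
  I : F.W → ℕ → List F.α → Prop
  Isub : ∀ w p as, I w p as → ∀ a ∈ as, a ∈ F.D w
  Imono : ∀ {w v} (p : ℕ) (as : List F.α), F.R w v → I w p as → I v p as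

/-- Intuitionistic truth of an `L`-formula at a world under an assignment. -/
def IModel.truth {F : IFrame} (M : IModel F) : F.W → (ℕ → F.α) → IForm → Prop
  | _, _, .falsum => False
  | w, σ, .atom p args => M.I w p (args.map σ)
  | w, σ, .and A B => M.truth w σ A ∧ M.truth w σ B
  | w, σ, .or A B => M.truth w σ A ∨ M.truth w σ B
  | w, σ, .impl A B => ∀ v, F.R w v → M.truth v σ A → M.truth v σ B
  | w, σ, .all x A =>
      ∀ v, F.R w v → ∀ τ : ℕ → F.α, (∀ y, y ≠ x → τ y = σ y) → τ x ∈ F.D v →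
        M.truth v τ A
  | w, σ, .ex x A =>
      ∃ τ : ℕ → F.α, (∀ y, y ≠ x → τ y = σ y) ∧ τ x ∈ F.D w ∧ M.truth w τ A

/-! ## The associated Q∘S4.t-model M̄ -/

/-- The Q∘S4.t-frame associated to an IQC-frame: same worlds and relation,
outer domain `U = ⋃ { D_w ∣ w ∈ W }`, same inner domains. -/
def IFrame.bar (F : IFrame) : TFrame where
  W := F.W
  U := {a : F.α // ∃ w, a ∈ F.D w}
  hW := F.hW
  hU := by
    obtain ⟨w⟩ := F.hW
    obtain ⟨a, ha⟩ := F.Dne w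
    exact ⟨⟨a, w, ha⟩⟩
  R := F.R
  refl := F.refl
  trans := F.trans
  D := fun w => {a | a.1 ∈ F.D w}
  Dne := fun w => by
    obtain ⟨a, ha⟩ := F.Dne w
    exact ⟨⟨a, w, ha⟩, ha⟩
  Dmono := fun h _ ha => F.Dmono h ha

/-- The Q∘S4.t-model `M̄` associated to an IQC-model `M`. -/
def IModel.bar {F : IFrame} (M : IModel F) : TModel F.bar where
  I := fun w p as => M.I w p (as.map Subtype.val)

/-! ### Infrastructure: axiom-scheme instances of S4.t inside Q∘S4.t -/

@[simp] lemma BForm.tsubst_neg (s : ℕ → TForm) (A : BForm) :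
    (A.neg).tsubst s = ((A.tsubst s).impl .falsum) := rfl

namespace QoS4t

private def s3 (A B C : TForm) : ℕ → TForm := fun n =>
  if n = 0 then A else if n = 1 then B else C

private lemma inst3 {φ : BForm} (h : S4t φ) (A B C : TForm) :
    QoS4t (φ.tsubst (s3 A B C)) := QoS4t.s4t φ _ h

lemma qAx1 (A B : TForm) : QoS4t (A.impl (B.impl A)) := by
  simpa [BForm.tsubst, s3] using inst3 (S4t.ax1 (.var 0) (.var 1)) A B B

lemma qAx2 (A B C : TForm) :
    QoS4t ((A.impl (B.impl C)).impl ((A.impl B).impl (A.impl C))) := by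
  simpa [BForm.tsubst, s3] using inst3 (S4t.ax2 (.var 0) (.var 1) (.var 2)) A B C

lemma qAx3 (A B : TForm) :
    QoS4t (((B.neg).impl (A.neg)).impl (A.impl B)) := by
  simpa [BForm.tsubst, s3, TForm.neg] using inst3 (S4t.ax3 (.var 0) (.var 1)) A B B

lemma qKF (A B : TForm) :
    QoS4t (((A.impl B).boxF).impl ((A.boxF).impl (B.boxF))) := by
  simpa [BForm.tsubst, s3] using inst3 (S4t.kF (.var 0) (.var 1)) A B B

lemma qTF (A : TForm) : QoS4t ((A.boxF).impl A) := by
  simpa [BForm.tsubst, s3] using inst3 (S4t.tF (.var 0)) A A A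

lemma qFourF (A : TForm) : QoS4t ((A.boxF).impl (A.boxF.boxF)) := by
  simpa [BForm.tsubst, s3] using inst3 (S4t.fourF (.var 0)) A A A

lemma qKP (A B : TForm) :
    QoS4t (((A.impl B).boxP).impl ((A.boxP).impl (B.boxP))) := by
  simpa [BForm.tsubst, s3] using inst3 (S4t.kP (.var 0) (.var 1)) A B B

lemma qTP (A : TForm) : QoS4t ((A.boxP).impl A) := by
  simpa [BForm.tsubst, s3] using inst3 (S4t.tP (.var 0)) A A A

lemma qFourP (A : TForm) : QoS4t ((A.boxP).impl (A.boxP.boxP)) := by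
  simpa [BForm.tsubst, s3] using inst3 (S4t.fourP (.var 0)) A A A

lemma qTense1 (A : TForm) : QoS4t (A.impl ((A.diaF).boxP)) := by
  simpa [BForm.tsubst, s3, BForm.diaF, TForm.diaF, TForm.neg] using
    inst3 (S4t.tense1 (.var 0)) A A A

lemma qTense2 (A : TForm) : QoS4t (A.impl ((A.diaP).boxF)) := by
  simpa [BForm.tsubst, s3, BForm.diaP, TForm.diaP, TForm.neg] using
    inst3 (S4t.tense2 (.var 0)) A A A

end QoS4t

/-! ### A hypothesis calculus over Q∘S4.t, with the deduction theorem -/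

inductive Ded : List TForm → TForm → Prop
  | hyp {Γ A} : A ∈ Γ → Ded Γ A
  | thm {Γ A} : QoS4t A → Ded Γ A
  | mp {Γ A B} : Ded Γ (A.impl B) → Ded Γ A → Ded Γ B

namespace Ded

lemma h0 {Γ A} : Ded (A :: Γ) A := .hyp (by simp)
lemma h1 {Γ A B} : Ded (A :: B :: Γ) B := .hyp (by simp)
lemma h2 {Γ A B C} : Ded (A :: B :: C :: Γ) C := .hyp (by simp)
lemma h3 {Γ A B C D} : Ded (A :: B :: C :: D :: Γ) D := .hyp (by simp)

private lemma qId (A : TForm) : QoS4t (A.impl A) :=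
  QoS4t.mp _ _ (QoS4t.mp _ _ (QoS4t.qAx2 A (A.impl A) A) (QoS4t.qAx1 A (A.impl A)))
    (QoS4t.qAx1 A A)

theorem deduction : ∀ {Δ B}, Ded Δ B → ∀ {Γ : List TForm} {A}, Δ = A :: Γ →
    Ded Γ (A.impl B) := by
  intro Δ B h
  induction h with
  | hyp hm =>
    intro Γ A hEq
    subst hEq
    rcases List.mem_cons.1 hm with rfl | hm'
    · exact .thm (qId _)
    · exact .mp (.thm (QoS4t.qAx1 _ _)) (.hyp hm')
  | thm ht => intro Γ A hEq; exact .mp (.thm (QoS4t.qAx1 _ _)) (.thm ht)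
  | mp hab ha ih1 ih2 =>
    intro Γ A hEq
    exact .mp (.mp (.thm (QoS4t.qAx2 _ _ _)) (ih1 hEq)) (ih2 hEq)

/-- The deduction theorem. -/
lemma dd {Γ : List TForm} {A B} (h : Ded (A :: Γ) B) : Ded Γ (A.impl B) :=
  deduction h rfl

private lemma toThm' : ∀ {Δ A}, Ded Δ A → Δ = [] → QoS4t A := by
  intro Δ A h
  induction h with
  | hyp hm => intro hEq; subst hEq; simp at hm
  | thm ht => intro _; exact ht
  | mp hab ha ih1 ih2 => intro hEq; exact QoS4t.mp _ _ (ih1 hEq) (ih2 hEq)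

lemma toThm {A} (h : Ded [] A) : QoS4t A := toThm' h rfl

end Ded

/-! ### Propositional lemmas in Q∘S4.t -/

namespace QoS4t

lemma cut {A B C : TForm} (h1 : QoS4t (A.impl B)) (h2 : QoS4t (B.impl C)) :
    QoS4t (A.impl C) :=
  Ded.toThm <| .dd <| .mp (.thm h2) (.mp (.thm h1) .h0)

lemma qId (A : TForm) : QoS4t (A.impl A) := Ded.toThm (.dd .h0)

lemma qDni (A : TForm) : QoS4t (A.impl A.neg.neg) :=
  Ded.toThm <| .dd <| .dd <| .mp .h0 .h1

lemma qExf (A : TForm) : QoS4t (TForm.falsum.impl A) :=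
  QoS4t.mp _ _ (qAx3 TForm.falsum A) (QoS4t.mp _ _ (qAx1 _ _) (qId TForm.falsum))

lemma qDne (A : TForm) : QoS4t (A.neg.neg.impl A) :=
  QoS4t.mp _ _ (qAx3 A.neg.neg A) (qDni A.neg)

lemma qContra1 (A B : TForm) : QoS4t ((A.impl B).impl ((B.neg).impl (A.neg))) :=
  Ded.toThm <| .dd <| .dd <| .dd <| .mp .h1 (.mp .h2 .h0)

lemma qContra3 (A B : TForm) : QoS4t (((A.neg).impl B).impl ((B.neg).impl A)) :=
  Ded.toThm <| .dd <| .dd <|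
    .mp (.thm (qDne A)) (.dd (.mp .h1 (.mp .h2 .h0)))

lemma qContra4 (A B : TForm) : QoS4t ((A.impl (B.neg)).impl (B.impl (A.neg))) :=
  Ded.toThm <| .dd <| .dd <| .dd <| .mp (.mp .h2 .h0) .h1

lemma contraR {A B : TForm} (h : QoS4t (A.impl B)) : QoS4t ((B.neg).impl (A.neg)) :=
  QoS4t.mp _ _ (qContra1 A B) h

lemma qAndI (A B : TForm) : QoS4t (A.impl (B.impl (A.and B))) :=
  Ded.toThm <| .dd <| .dd <| .dd <| .mp (.mp .h0 .h2) .h1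

lemma qAndE1 (A B : TForm) : QoS4t ((A.and B).impl A) :=
  Ded.toThm <| .dd <|
    .mp (.thm (qDne A)) <| .dd <|
      .mp .h1 (.dd (.mp (.thm (qExf (B.neg))) (.mp .h1 .h0)))

lemma qAndE2 (A B : TForm) : QoS4t ((A.and B).impl B) :=
  Ded.toThm <| .dd <|
    .mp (.thm (qDne B)) <| .dd <|
      .mp .h1 (.mp (.thm (qAx1 (B.neg) A)) .h0)

lemma qOrI1 (A B : TForm) : QoS4t (A.impl (A.or B)) :=
  Ded.toThm <| .dd <| .dd <| .mp (.thm (qExf B)) (.mp .h0 .h1)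

lemma qOrI2 (A B : TForm) : QoS4t (B.impl (A.or B)) := qAx1 B A.neg

lemma qOrE (A B C : TForm) :
    QoS4t ((A.impl C).impl ((B.impl C).impl ((A.or B).impl C))) :=
  Ded.toThm <| .dd <| .dd <| .dd <|
    .mp (.thm (qDne C)) <| .dd <|
      .mp .h0 (.mp .h2 (.mp .h1 (.mp (.mp (.thm (qContra1 A C)) .h3) .h0)))

end QoS4t
/-! ### Structural lemmas about TForm -/

namespace TForm

@[simp] lemma freeVars_neg (A : TForm) : A.neg.freeVars = A.freeVars := by
  simp [neg, freeVars]

@[simp] lemma freeVars_and (A B : TForm) :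
    (A.and B).freeVars = A.freeVars ∪ B.freeVars := by
  simp [and, freeVars]

@[simp] lemma freeVars_or (A B : TForm) :
    (A.or B).freeVars = A.freeVars ∪ B.freeVars := by
  simp [or, freeVars]

@[simp] lemma freeVars_ex (x : ℕ) (A : TForm) :
    (ex x A).freeVars = A.freeVars.erase x := by
  simp [ex, freeVars]

@[simp] lemma freeVars_diaF (A : TForm) : A.diaF.freeVars = A.freeVars := by
  simp [diaF, freeVars]

@[simp] lemma freeVars_diaP (A : TForm) : A.diaP.freeVars = A.freeVars := by
  simp [diaP, freeVars]

@[simp] lemma subst_neg (x y : ℕ) (A : TForm) :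
    (A.neg).subst x y = (A.subst x y).neg := rfl

@[simp] lemma subst_and (x y : ℕ) (A B : TForm) :
    (A.and B).subst x y = (A.subst x y).and (B.subst x y) := rfl

@[simp] lemma subst_or (x y : ℕ) (A B : TForm) :
    (A.or B).subst x y = (A.subst x y).or (B.subst x y) := rfl

@[simp] lemma subst_diaF (x y : ℕ) (A : TForm) :
    (A.diaF).subst x y = (A.subst x y).diaF := rfl

@[simp] lemma subst_diaP (x y : ℕ) (A : TForm) :
    (A.diaP).subst x y = (A.subst x y).diaP := rfl

lemma subst_ex (x y z : ℕ) (A : TForm) :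
    (ex z A).subst x y = if z = x then ex z A else ex z (A.subst x y) := by
  by_cases h : z = x <;> simp [ex, subst, neg, h]

lemma subst_self (x : ℕ) : ∀ A : TForm, A.subst x x = A := by
  intro A
  induction A with
  | falsum => rfl
  | atom p args =>
    have : (fun v => if v = x then x else v) = (id : ℕ → ℕ) := by
      funext v; by_cases h : v = x <;> simp [h]
    simp [subst, this]
  | impl A B ihA ihB => simp [subst, ihA, ihB]
  | all z A ih => simp [subst, ih]
  | boxF A ih => simp [subst, ih]
  | boxP A ih => simp [subst, ih]

lemma substOK_self (x : ℕ) : ∀ A : TForm, A.substOK x x := by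
  intro A
  induction A with
  | falsum => trivial
  | atom p args => trivial
  | impl A B ihA ihB => exact ⟨ihA, ihB⟩
  | all z A ih =>
    by_cases h : z = x
    · exact Or.inl h
    · exact Or.inr ⟨fun h' => absurd h' h, ih⟩
  | boxF A ih => exact ih
  | boxP A ih => exact ih

@[simp] lemma substOK_neg (x y : ℕ) (A : TForm) :
    (A.neg).substOK x y ↔ A.substOK x y := by
  simp [neg, substOK]

@[simp] lemma substOK_diaP (x y : ℕ) (A : TForm) :
    (A.diaP).substOK x y ↔ A.substOK x y := by
  simp [diaP, substOK]

@[simp] lemma substOK_ex (x y z : ℕ) (A : TForm) :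
    (ex z A).substOK x y ↔
      z = x ∨ ((z = y → x ∉ A.freeVars) ∧ A.substOK x y) := by
  simp [ex, substOK]

@[simp] lemma closure_nil (A : TForm) : closure [] A = A := rfl

@[simp] lemma closure_cons (a : ℕ) (xs : List ℕ) (A : TForm) :
    closure (a :: xs) A = all a (closure xs A) := rfl

lemma closure_append (l₁ l₂ : List ℕ) (A : TForm) :
    closure (l₁ ++ l₂) A = closure l₁ (closure l₂ A) := by
  simp [closure, List.foldr_append]

end TForm

/-! ### Modal derived rules -/

namespace QoS4t

lemma monoF {A B : TForm} (h : QoS4t (A.impl B)) :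
    QoS4t ((A.boxF).impl (B.boxF)) :=
  QoS4t.mp _ _ (qKF A B) (QoS4t.necF _ h)

lemma monoP {A B : TForm} (h : QoS4t (A.impl B)) :
    QoS4t ((A.boxP).impl (B.boxP)) :=
  QoS4t.mp _ _ (qKP A B) (QoS4t.necP _ h)

lemma boxDist2F {A B C : TForm} (h : QoS4t (A.impl (B.impl C))) :
    QoS4t ((A.boxF).impl ((B.boxF).impl (C.boxF))) :=
  Ded.toThm <| .dd <| .dd <|
    .mp (.mp (.thm (qKF B C)) (.mp (.thm (monoF h)) .h1)) .h0

lemma qKdiaF (A B : TForm) :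
    QoS4t (((A.impl B).boxF).impl ((A.diaF).impl (B.diaF))) := by
  have t2 : QoS4t (((A.impl B).boxF).impl (((B.neg).boxF).impl ((A.neg).boxF))) :=
    Ded.toThm <| .dd <| .dd <|
      .mp (.mp (.thm (qKF B.neg A.neg)) (.mp (.thm (monoF (qContra1 A B))) .h1)) .h0
  exact Ded.toThm <| .dd <| .dd <|
    .mp (.mp (.thm (qContra1 ((B.neg).boxF) ((A.neg).boxF))) (.mp (.thm t2) .h1)) .h0

lemma qKdiaP (A B : TForm) :
    QoS4t (((A.impl B).boxP).impl ((A.diaP).impl (B.diaP))) := by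
  have t2 : QoS4t (((A.impl B).boxP).impl (((B.neg).boxP).impl ((A.neg).boxP))) :=
    Ded.toThm <| .dd <| .dd <|
      .mp (.mp (.thm (qKP B.neg A.neg)) (.mp (.thm (monoP (qContra1 A B))) .h1)) .h0
  exact Ded.toThm <| .dd <| .dd <|
    .mp (.mp (.thm (qContra1 ((B.neg).boxP) ((A.neg).boxP))) (.mp (.thm t2) .h1)) .h0

lemma diaPmono {A B : TForm} (h : QoS4t (A.impl B)) :
    QoS4t ((A.diaP).impl (B.diaP)) :=
  QoS4t.mp _ _ (qKdiaP A B) (QoS4t.necP _ h)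

lemma diaFmono {A B : TForm} (h : QoS4t (A.impl B)) :
    QoS4t ((A.diaF).impl (B.diaF)) :=
  QoS4t.mp _ _ (qKdiaF A B) (QoS4t.necF _ h)

lemma qTdiaP (A : TForm) : QoS4t (A.impl (A.diaP)) :=
  QoS4t.mp _ _ (qContra4 ((A.neg).boxP) A) (qTP A.neg)

lemma qDiaPBoxF (A : TForm) : QoS4t (((A.boxF).diaP).impl A) := by
  have t2 : QoS4t ((((A.neg.neg).boxF).diaP).impl A) :=
    QoS4t.mp _ _ (qContra3 A (((A.neg).diaF).boxP)) (qTense1 A.neg)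
  exact cut (diaPmono (monoF (qDni A))) t2

lemma qDia4P (A : TForm) : QoS4t (((A.diaP).diaP).impl (A.diaP)) := by
  have t2 : QoS4t (((A.neg).boxP).impl ((((A.diaP).neg)).boxP)) :=
    cut (qFourP A.neg) (monoP (qDni ((A.neg).boxP)))
  exact contraR t2

lemma backPersist {E : TForm} (h : QoS4t (E.impl (E.boxF))) :
    QoS4t ((E.diaP).impl E) :=
  cut (diaPmono h) (qDiaPBoxF E)

end QoS4t

/-! ### Quantifier derived rules -/

namespace QoS4t

lemma allMono (x : ℕ) {A B : TForm} (h : QoS4t (A.impl B)) :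
    QoS4t ((TForm.all x A).impl (TForm.all x B)) :=
  QoS4t.mp _ _ (QoS4t.distrib x A B) (QoS4t.gen x _ h)

lemma allComm (x y : ℕ) (A : TForm) :
    QoS4t ((TForm.all x (TForm.all y A)).impl (TForm.all y (TForm.all x A))) :=
  QoS4t.mp _ _ (qAndE1 _ _) (QoS4t.comm x y A)

lemma specSelf (x : ℕ) (A : TForm) :
    QoS4t (TForm.all x ((TForm.all x A).impl A)) := by
  have := QoS4t.ui x x A (TForm.substOK_self x A)
  rwa [TForm.subst_self] at this

lemma allImpThm (x : ℕ) {A B : TForm} (h : x ∉ A.freeVars) :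
    QoS4t ((TForm.all x (A.impl B)).impl (A.impl (TForm.all x B))) :=
  Ded.toThm <| .dd <| .dd <|
    .mp (.mp (.thm (QoS4t.distrib x A B)) .h1) (.mp (.thm (QoS4t.vac x A h)) .h0)

lemma exImpThm (x : ℕ) {A B : TForm} (h : x ∉ B.freeVars) :
    QoS4t ((TForm.all x (A.impl B)).impl ((TForm.ex x A).impl B)) := by
  have t1 : QoS4t ((TForm.all x (A.impl B)).impl
      (TForm.all x ((B.neg).impl (A.neg)))) := allMono x (qContra1 A B)
  have t2 : QoS4t ((B.neg).impl (TForm.all x (B.neg))) :=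
    QoS4t.vac x B.neg (by simpa using h)
  exact Ded.toThm <| .dd <|
    .mp (.thm (qContra3 B (TForm.all x A.neg))) <| .dd <|
      .mp (.mp (.thm (QoS4t.distrib x B.neg A.neg)) (.mp (.thm t1) .h1))
        (.mp (.thm t2) .h0)

lemma exMono (x : ℕ) {A B : TForm} (h : QoS4t (A.impl B)) :
    QoS4t ((TForm.ex x A).impl (TForm.ex x B)) :=
  QoS4t.mp _ _ (qContra1 (TForm.all x B.neg) (TForm.all x A.neg))
    (allMono x (contraR h))

lemma diaAllF (x : ℕ) (B : TForm) :
    QoS4t (((TForm.all x B).diaF).impl (TForm.all x (B.diaF))) := by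
  have t3 : QoS4t (TForm.all x (((TForm.all x B).impl B).boxF)) :=
    QoS4t.mp _ _ (QoS4t.cbfF x _) (QoS4t.necF _ (specSelf x B))
  have t5 : QoS4t (TForm.all x (((TForm.all x B).diaF).impl (B.diaF))) :=
    QoS4t.mp _ _ (allMono x (qKdiaF (TForm.all x B) B)) t3
  have t6 : x ∉ ((TForm.all x B).diaF).freeVars := by
    simp [TForm.freeVars]
  exact QoS4t.mp _ _ (allImpThm x t6) t5

lemma exBarcanF (x : ℕ) (A : TForm) :
    QoS4t ((TForm.ex x (A.boxF)).impl ((TForm.ex x A).boxF)) := by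
  have d := diaAllF x A.neg
  have c : QoS4t (((TForm.all x ((A.neg).diaF)).neg).impl ((TForm.ex x A).boxF)) :=
    QoS4t.mp _ _ (qContra3 (((TForm.all x A.neg).neg).boxF)
      (TForm.all x ((A.neg).diaF))) d
  have e1 : QoS4t (((A.neg).diaF).impl ((A.boxF).neg)) :=
    QoS4t.mp _ _ (qContra1 (A.boxF) ((A.neg.neg).boxF)) (monoF (qDni A))
  have e3 : QoS4t (((TForm.all x ((A.boxF).neg)).neg).impl
      ((TForm.all x ((A.neg).diaF)).neg)) := contraR (allMono x e1)
  exact cut e3 c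

lemma genList (xs : List ℕ) {D : TForm} (h : QoS4t D) :
    QoS4t (TForm.closure xs D) := by
  induction xs with
  | nil => exact h
  | cons a xs ih => exact QoS4t.gen a _ ih

lemma pullImp (xs : List ℕ) (y : ℕ) (D : TForm) :
    QoS4t ((TForm.closure xs (TForm.all y D)).impl
      (TForm.all y (TForm.closure xs D))) := by
  induction xs with
  | nil => exact qId _
  | cons a xs ih => exact cut (allMono a ih) (allComm a y _)

lemma closureOfAll {y : ℕ} {D : TForm} {xs : List ℕ}
    (h : QoS4t (TForm.all y D)) (hy : y ∈ xs ∨ y ∉ D.freeVars) :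
    QoS4t (TForm.closure xs D) := by
  rcases hy with hy | hy
  · obtain ⟨l₁, l₂, rfl⟩ := List.append_of_mem hy
    rw [TForm.closure_append, TForm.closure_cons]
    exact genList l₁ (QoS4t.mp _ _ (pullImp l₂ y D) (genList l₂ h))
  · exact genList xs (QoS4t.mp _ _ (QoS4t.nid y D hy) h)

end QoS4t
/-! ### Structural properties of the temporal Gödel translation -/

namespace IForm

lemma fv_t : ∀ A : IForm, A.t.freeVars = A.freeVars := by
  intro A
  induction A with
  | falsum => rfl
  | atom p args => rfl
  | and A B ihA ihB => simp [t, freeVars, TForm.freeVars, ihA, ihB]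
  | or A B ihA ihB => simp [t, freeVars, TForm.freeVars, ihA, ihB]
  | impl A B ihA ihB => simp [t, freeVars, TForm.freeVars, ihA, ihB]
  | all x A ih => simp [t, freeVars, TForm.freeVars, ih]
  | ex x A ih => simp [t, freeVars, TForm.freeVars, ih]

lemma subst_t (x y : ℕ) : ∀ A : IForm, (A.subst x y).t = A.t.subst x y := by
  intro A
  induction A with
  | falsum => rfl
  | atom p args => rfl
  | and A B ihA ihB => simp [subst, t, ihA, ihB]
  | or A B ihA ihB => simp [subst, t, ihA, ihB]
  | impl A B ihA ihB => simp [subst, t, TForm.subst, ihA, ihB]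
  | all z A ih => by_cases h : z = x <;> simp [subst, t, TForm.subst, h, ih]
  | ex z A ih => by_cases h : z = x <;> simp [subst, t, TForm.subst_ex, h, ih]

lemma substOK_t (x y : ℕ) : ∀ A : IForm, A.substOK x y → A.t.substOK x y := by
  intro A
  induction A with
  | falsum => intro _; trivial
  | atom p args => intro _; trivial
  | and A B ihA ihB =>
    intro h
    simp only [substOK] at h
    simp [t, TForm.and, TForm.neg, TForm.substOK, ihA h.1, ihB h.2]
  | or A B ihA ihB =>
    intro h
    simp only [substOK] at h
    simp [t, TForm.or, TForm.neg, TForm.substOK, ihA h.1, ihB h.2]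
  | impl A B ihA ihB =>
    intro h
    simp only [substOK] at h
    simp [t, TForm.substOK, ihA h.1, ihB h.2]
  | all z A ih =>
    intro h
    simp only [substOK] at h
    simp only [t, TForm.substOK]
    rcases h with h | ⟨h1, h2⟩
    · exact Or.inl h
    · exact Or.inr ⟨fun hz => by rw [fv_t]; exact h1 hz, ih h2⟩
  | ex z A ih =>
    intro h
    simp only [substOK] at h
    simp only [t, TForm.substOK_diaP, TForm.substOK_ex]
    rcases h with h | ⟨h1, h2⟩
    · exact Or.inl h
    · exact Or.inr ⟨fun hz => by rw [fv_t]; exact h1 hz, ih h2⟩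

/-- Translations are provably "future-persistent". -/
lemma t_boxed : ∀ A : IForm, QoS4t (A.t.impl (A.t.boxF)) := by
  intro A
  induction A with
  | falsum => exact QoS4t.qExf _
  | atom p args => exact QoS4t.qFourF _
  | and A B ihA ihB =>
    refine Ded.toThm (.dd ?_)
    exact .mp
      (.mp (.thm (QoS4t.boxDist2F (QoS4t.qAndI A.t B.t)))
        (.mp (.thm ihA) (.mp (.thm (QoS4t.qAndE1 A.t B.t)) .h0)))
      (.mp (.thm ihB) (.mp (.thm (QoS4t.qAndE2 A.t B.t)) .h0))
  | or A B ihA ihB =>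
    exact QoS4t.mp _ _
      (QoS4t.mp _ _ (QoS4t.qOrE A.t B.t ((A.t.or B.t).boxF))
        (QoS4t.cut ihA (QoS4t.monoF (QoS4t.qOrI1 A.t B.t))))
      (QoS4t.cut ihB (QoS4t.monoF (QoS4t.qOrI2 A.t B.t)))
  | impl A B ihA ihB => exact QoS4t.qFourF _
  | all x A ih => exact QoS4t.qFourF _
  | ex x A ih =>
    exact QoS4t.cut (QoS4t.qTense2 ((TForm.ex x A.t).diaP))
      (QoS4t.monoF (QoS4t.qDia4P (TForm.ex x A.t)))

end IForm
/-! ### Translations of substitution instances of IPC theorems -/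

theorem ipc_t {φ : PropForm} (h : IPC φ) :
    ∀ s : ℕ → IForm, QoS4t ((φ.isubst s).t) := by
  induction h with
  | ax1 A B =>
    intro s
    simp only [PropForm.isubst, IForm.t]
    exact QoS4t.necF _ (QoS4t.cut (IForm.t_boxed (A.isubst s))
      (QoS4t.monoF (QoS4t.qAx1 (A.isubst s).t (B.isubst s).t)))
  | ax2 A B C =>
    intro s
    simp only [PropForm.isubst, IForm.t]
    set A' := (A.isubst s).t
    set B' := (B.isubst s).t
    set C' := (C.isubst s).t
    have inner1 : QoS4t ((A'.impl ((B'.impl C').boxF)).impl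
        ((A'.impl B').impl (A'.impl C'))) :=
      Ded.toThm <| .dd <| .dd <| .dd <|
        .mp (.mp (.thm (QoS4t.qTF (B'.impl C'))) (.mp .h2 .h0)) (.mp .h1 .h0)
    have d := QoS4t.boxDist2F inner1
    exact QoS4t.necF _ (QoS4t.cut (QoS4t.qFourF _) (QoS4t.monoF d))
  | andE1 A B =>
    intro s
    simp only [PropForm.isubst, IForm.t]
    exact QoS4t.necF _ (QoS4t.qAndE1 _ _)
  | andE2 A B =>
    intro s
    simp only [PropForm.isubst, IForm.t]
    exact QoS4t.necF _ (QoS4t.qAndE2 _ _)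
  | andI A B =>
    intro s
    simp only [PropForm.isubst, IForm.t]
    exact QoS4t.necF _ (QoS4t.cut (IForm.t_boxed (A.isubst s))
      (QoS4t.monoF (QoS4t.qAndI (A.isubst s).t (B.isubst s).t)))
  | orI1 A B =>
    intro s
    simp only [PropForm.isubst, IForm.t]
    exact QoS4t.necF _ (QoS4t.qOrI1 _ _)
  | orI2 A B =>
    intro s
    simp only [PropForm.isubst, IForm.t]
    exact QoS4t.necF _ (QoS4t.qOrI2 _ _)
  | orE A B C =>
    intro s
    simp only [PropForm.isubst, IForm.t]
    set A' := (A.isubst s).t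
    set B' := (B.isubst s).t
    set C' := (C.isubst s).t
    have d := QoS4t.boxDist2F (QoS4t.qOrE A' B' C')
    exact QoS4t.necF _ (QoS4t.cut (QoS4t.qFourF _) (QoS4t.monoF d))
  | exfalso A =>
    intro s
    simp only [PropForm.isubst, IForm.t]
    exact QoS4t.necF _ (QoS4t.qExf _)
  | mp A B h1 h2 ih1 ih2 =>
    intro s
    have := ih1 s
    simp only [PropForm.isubst, IForm.t] at this
    exact QoS4t.mp _ _ (QoS4t.mp _ _ (QoS4t.qTF _) this) (ih2 s)
/-! ### The quantifier axiom schemes -/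

lemma case_ui (x y : ℕ) (A : IForm) (hok : A.substOK x y) :
    QoS4t (TForm.all y ((IForm.impl (IForm.all x A) (A.subst x y)).t)) := by
  have hok' := IForm.substOK_t x y A hok
  have u := QoS4t.ui x y A.t hok'
  have w1 : QoS4t (((TForm.all x A.t).impl (A.t.subst x y)).impl
      (((TForm.all x A.t).boxF).impl (A.t.subst x y))) :=
    Ded.toThm <| .dd <| .dd <| .mp .h1 (.mp (.thm (QoS4t.qTF _)) .h0)
  have u2 := QoS4t.mp _ _ (QoS4t.allMono y w1) u
  have u3 := QoS4t.mp _ _ (QoS4t.cbfF y _) (QoS4t.necF _ u2)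
  simp only [IForm.t, IForm.subst_t]
  exact u3

lemma case_exI (x y : ℕ) (A : IForm) (hok : A.substOK x y) :
    QoS4t (TForm.all y ((IForm.impl (A.subst x y) (IForm.ex x A)).t)) := by
  have hok'' : (A.t.neg).substOK x y := by
    rw [TForm.substOK_neg]; exact IForm.substOK_t x y A hok
  have u := QoS4t.ui x y A.t.neg hok''
  have w1 : QoS4t (((TForm.all x A.t.neg).impl ((A.t.subst x y).neg)).impl
      ((A.t.subst x y).impl ((TForm.ex x A.t).diaP))) :=
    Ded.toThm <| .dd <| .dd <|
      .mp (.thm (QoS4t.qTdiaP (TForm.ex x A.t)))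
        (.mp (.mp (.thm (QoS4t.qContra4 (TForm.all x A.t.neg) (A.t.subst x y))) .h1) .h0)
  have u2 := QoS4t.mp _ _ (QoS4t.allMono y w1) u
  have u3 := QoS4t.mp _ _ (QoS4t.cbfF y _) (QoS4t.necF _ u2)
  simp only [IForm.t, IForm.subst_t]
  exact u3

lemma case_allImp (x : ℕ) (A B : IForm) (h : x ∉ A.freeVars) :
    QoS4t ((IForm.impl (IForm.all x (A.impl B)) (A.impl (IForm.all x B))).t) := by
  have hx : x ∉ A.t.freeVars := by rw [IForm.fv_t]; exact h
  have d : QoS4t ((TForm.all x ((A.t.impl B.t).boxF)).impl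
      (A.t.impl (TForm.all x B.t))) :=
    Ded.toThm <| .dd <| .dd <|
      .mp (.mp (.thm (QoS4t.distrib x A.t B.t))
            (.mp (.thm (QoS4t.allMono x (QoS4t.qTF (A.t.impl B.t)))) .h1))
        (.mp (.thm (QoS4t.vac x A.t hx)) .h0)
  have bd := QoS4t.boxDist2F d
  have e : QoS4t (((TForm.all x ((A.t.impl B.t).boxF)).boxF).impl
      (A.t.impl ((TForm.all x B.t).boxF))) :=
    Ded.toThm <| .dd <| .dd <|
      .mp (.mp (.thm bd) .h1) (.mp (.thm (IForm.t_boxed A)) .h0)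
  have f := QoS4t.cut (QoS4t.qFourF _) (QoS4t.monoF e)
  simp only [IForm.t]
  exact QoS4t.necF _ f

lemma case_exImp (x : ℕ) (A B : IForm) (h : x ∉ B.freeVars) :
    QoS4t ((IForm.impl (IForm.all x (A.impl B)) (IForm.impl (IForm.ex x A) B)).t) := by
  have hx : x ∉ B.t.freeVars := by rw [IForm.fv_t]; exact h
  have persist : QoS4t ((TForm.ex x A.t).impl ((TForm.ex x A.t).boxF)) :=
    QoS4t.cut (QoS4t.exMono x (IForm.t_boxed A)) (QoS4t.exBarcanF x A.t)
  have back := QoS4t.backPersist persist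
  have d : QoS4t ((TForm.all x ((A.t.impl B.t).boxF)).impl
      (((TForm.ex x A.t).diaP).impl B.t)) :=
    Ded.toThm <| .dd <| .dd <|
      .mp (.mp (.thm (QoS4t.exImpThm x hx))
            (.mp (.thm (QoS4t.allMono x (QoS4t.qTF (A.t.impl B.t)))) .h1))
        (.mp (.thm back) .h0)
  have e := QoS4t.cut (QoS4t.qTF (TForm.all x ((A.t.impl B.t).boxF)))
    (by exact d)
  have e' : QoS4t (((TForm.all x ((A.t.impl B.t).boxF)).boxF).impl
      (((TForm.ex x A.t).diaP).impl B.t)) := e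
  have f := QoS4t.cut (QoS4t.qFourF _) (QoS4t.monoF e')
  simp only [IForm.t]
  exact QoS4t.necF _ f
/-- If `C` is an instance of an axiom scheme of IQC and `x₁, …, xₙ` are the free
variables of `C`, then `∀x₁ ⋯ ∀xₙ C^t` is provable in Q∘S4.t. -/
theorem closure_of_translation_of_axiom_provable (C : IForm)
    (hC : (∃ (φ : PropForm) (s : ℕ → IForm), IPC φ ∧ C = φ.isubst s) ∨
          (∃ (x y : ℕ) (A : IForm), A.substOK x y ∧
            C = (IForm.all x A).impl (A.subst x y)) ∨
          (∃ (x y : ℕ) (A : IForm), A.substOK x y ∧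
            C = (A.subst x y).impl (IForm.ex x A)) ∨
          (∃ (x : ℕ) (A B : IForm), x ∉ A.freeVars ∧
            C = (IForm.all x (A.impl B)).impl (A.impl (IForm.all x B))) ∨
          (∃ (x : ℕ) (A B : IForm), x ∉ B.freeVars ∧
            C = (IForm.all x (A.impl B)).impl ((IForm.ex x A).impl B)))
    (xs : List ℕ) (hnd : xs.Nodup) (hfv : xs.toFinset = C.freeVars) :
    QoS4t (TForm.closure xs C.t) := by
  rcases hC with ⟨φ, s, hφ, rfl⟩ | ⟨x, y, A, hok, rfl⟩ | ⟨x, y, A, hok, rfl⟩ |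
    ⟨x, A, B, h, rfl⟩ | ⟨x, A, B, h, rfl⟩
  · exact QoS4t.genList xs (ipc_t hφ s)
  · refine QoS4t.closureOfAll (case_ui x y A hok) ?_
    by_cases hm : y ∈ xs
    · exact Or.inl hm
    · refine Or.inr ?_
      rw [IForm.fv_t, ← hfv]
      simpa using hm
  · refine QoS4t.closureOfAll (case_exI x y A hok) ?_
    by_cases hm : y ∈ xs
    · exact Or.inl hm
    · refine Or.inr ?_
      rw [IForm.fv_t, ← hfv]
      simpa using hm
  · exact QoS4t.genList xs (case_allImp x A B h)
  · exact QoS4t.genList xs (case_exImp x A B h)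
end

section
/- Let A, B be formulas of L, let x̄ be the list of free variables of A → B, ȳ the list of free variables of A, and z̄ the list of free variables of B. If ∀x̄ (A → B)^t is provable in Q∘S4.t and ∀ȳ A^t is provable in Q∘S4.t, then ∀z̄ B^t is provable in Q∘S4.t. -/
/-! Since `□F C → C` is an S4.t axiom, `∀x̄ (A^t → B^t)` is provable. Generalizing over the
variables of `x̄` missing from `ȳ` and commuting quantifiers turns `∀ȳ A^t` into `∀x̄ A^t`, and
`∀x̄` distributes over implication, giving `∀x̄ B^t`. The quantifiers over variables not free in
`B^t` are then removed by (NID). -/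

namespace S4t

variable {a b c : BForm}

lemma imp_trans (hab : S4t (a.impl b)) (hbc : S4t (b.impl c)) : S4t (a.impl c) :=
  mp _ _ (mp _ _ (ax2 a b c) (mp _ _ (ax1 (b.impl c) a) hbc)) hab

lemma imp_self (a : BForm) : S4t (a.impl a) :=
  mp _ _ (mp _ _ (ax2 a (a.impl a) a) (ax1 a (a.impl a))) (ax1 a a)

lemma imp_swap (h : S4t (a.impl (b.impl c))) : S4t (b.impl (a.impl c)) :=
  imp_trans (ax1 b a) (mp _ _ (ax2 a b c) h)

lemma imp_comp (a b c : BForm) : S4t ((b.impl c).impl ((a.impl b).impl (a.impl c))) :=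
  imp_trans (ax1 (b.impl c) a) (ax2 a b c)

lemma apply_imp (a b : BForm) : S4t (a.impl ((a.impl b).impl b)) :=
  imp_swap (imp_self (a.impl b))

lemma imp_imp_imp_left (c : BForm) (hab : S4t (a.impl b)) :
    S4t ((b.impl c).impl (a.impl c)) :=
  imp_swap (imp_trans hab (apply_imp b c))

lemma not_not_intro (a : BForm) : S4t (a.impl a.neg.neg) := apply_imp a .falsum

lemma of_not_not (a : BForm) : S4t (a.neg.neg.impl a) :=
  mp _ _ (ax3 a.neg.neg a) (not_not_intro a.neg)

lemma neg_imp_imp_neg (a b : BForm) : S4t (a.neg.impl (a.impl b.neg)) :=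
  mp _ _ (ax2 a .falsum b.neg) (mp _ _ (ax1 (BForm.falsum.impl b.neg) a) (ax1 .falsum b))

-- `∧`-elimination for the classical encoding used by `TForm.and`.
lemma left_of_neg_imp_neg (a b : BForm) : S4t ((a.impl b.neg).neg.impl a) :=
  imp_trans (imp_imp_imp_left .falsum (neg_imp_imp_neg a b)) (of_not_not a)

end S4t

lemma List.exists_perm_append_of_subset {α : Type*} {l₁ l₂ : List α} (hl₁ : l₁.Nodup)
    (h : l₁ ⊆ l₂) : ∃ r, l₂.Perm (l₁ ++ r) := by
  obtain ⟨l, hl, hsub⟩ := List.subperm_of_subset hl₁ h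
  obtain ⟨r, hr⟩ := hsub.exists_perm_append
  exact ⟨r, hr.trans (hl.append_right r)⟩

lemma TForm.closure_append_s14 (L L' : List ℕ) (C : TForm) :
    TForm.closure (L ++ L') C = TForm.closure L (TForm.closure L' C) :=
  List.foldr_append

lemma TForm.freeVars_closure_subset (L : List ℕ) (C : TForm) :
    (TForm.closure L C).freeVars ⊆ C.freeVars := by
  induction L with
  | nil => exact subset_rfl
  | cons x L ih => exact fun _ hv => ih (Finset.mem_of_mem_erase hv)

lemma IForm.freeVars_t (A : IForm) : A.t.freeVars = A.freeVars := by
  induction A <;>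
    simp [IForm.t, TForm.freeVars, IForm.freeVars, TForm.neg, TForm.and, TForm.or,
      TForm.diaP, TForm.ex, *]

namespace QoS4t

variable {C D E : TForm} {L L' : List ℕ}

lemma imp_self (C : TForm) : QoS4t (C.impl C) :=
  s4t ((BForm.var 0).impl (.var 0)) (fun _ => C) (S4t.imp_self _)

lemma imp_trans (hCD : QoS4t (C.impl D)) (hDE : QoS4t (D.impl E)) : QoS4t (C.impl E) :=
  mp _ _ (mp _ _ (s4t (((BForm.var 1).impl (.var 2)).impl
      (((BForm.var 0).impl (.var 1)).impl ((BForm.var 0).impl (.var 2))))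
    (fun | 0 => C | 1 => D | _ => E) (S4t.imp_comp _ _ _)) hDE) hCD

lemma boxF_imp (C : TForm) : QoS4t (C.boxF.impl C) :=
  s4t ((BForm.var 0).boxF.impl (.var 0)) (fun _ => C) (S4t.tF _)

lemma and_left (C D : TForm) : QoS4t ((C.and D).impl C) :=
  s4t (((BForm.var 0).impl (BForm.var 1).neg).neg.impl (.var 0))
    (fun | 0 => C | _ => D) (S4t.left_of_neg_imp_neg _ _)

lemma all_imp_all (x : ℕ) (h : QoS4t (C.impl D)) :
    QoS4t ((TForm.all x C).impl (TForm.all x D)) :=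
  mp _ _ (distrib x C D) (gen x _ h)

lemma all_comm (x y : ℕ) (C : TForm) :
    QoS4t ((TForm.all x (TForm.all y C)).impl (TForm.all y (TForm.all x C))) :=
  mp _ _ (and_left _ _) (comm x y C)

lemma closure_gen (L : List ℕ) (h : QoS4t C) : QoS4t (TForm.closure L C) := by
  induction L with
  | nil => exact h
  | cons x L ih => exact gen x _ ih

lemma closure_imp_closure (L : List ℕ) (C D : TForm) :
    QoS4t ((TForm.closure L (C.impl D)).impl
      ((TForm.closure L C).impl (TForm.closure L D))) := by
  induction L with
  | nil => exact imp_self _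
  | cons x L ih => exact imp_trans (all_imp_all x ih) (distrib x _ _)

lemma closure_mp (hCD : QoS4t (TForm.closure L (C.impl D)))
    (hC : QoS4t (TForm.closure L C)) : QoS4t (TForm.closure L D) :=
  mp _ _ (mp _ _ (closure_imp_closure L C D) hCD) hC

lemma closure_mono (L : List ℕ) (h : QoS4t (C.impl D)) (hC : QoS4t (TForm.closure L C)) :
    QoS4t (TForm.closure L D) :=
  closure_mp (closure_gen L h) hC

lemma closure_imp_closure_of_perm (p : L.Perm L') (C : TForm) :
    QoS4t ((TForm.closure L C).impl (TForm.closure L' C)) := by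
  induction p with
  | nil => exact imp_self _
  | cons x _ ih => exact all_imp_all x ih
  | swap x y L => exact all_comm y x (TForm.closure L C)
  | trans _ _ ih₁ ih₂ => exact imp_trans ih₁ ih₂

lemma closure_of_perm (p : L.Perm L') (h : QoS4t (TForm.closure L C)) :
    QoS4t (TForm.closure L' C) :=
  mp _ _ (closure_imp_closure_of_perm p C) h

lemma closure_imp_of_forall_not_mem (L : List ℕ) (hL : ∀ v ∈ L, v ∉ C.freeVars) :
    QoS4t ((TForm.closure L C).impl C) := by
  induction L with
  | nil => exact imp_self _
  | cons x L ih =>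
    refine imp_trans (nid x (TForm.closure L C) fun hx => ?_)
      (ih fun v hv => hL v (List.mem_cons_of_mem _ hv))
    exact hL x List.mem_cons_self (TForm.freeVars_closure_subset L C hx)

lemma closure_of_subset (hL : L.Nodup) (hLL' : L ⊆ L') (h : QoS4t (TForm.closure L C)) :
    QoS4t (TForm.closure L' C) := by
  obtain ⟨R, hR⟩ := List.exists_perm_append_of_subset hL hLL'
  have hRL : QoS4t (TForm.closure (R ++ L) C) := by
    rw [TForm.closure_append_s14]
    exact closure_gen R h
  exact closure_of_perm (List.perm_append_comm.trans hR.symm) hRL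

lemma closure_of_superset_of_not_mem_freeVars (hL' : L'.Nodup) (hL : L.Nodup) (hLL' : L ⊆ L')
    (hfree : ∀ v ∈ L', v ∉ L → v ∉ C.freeVars) (h : QoS4t (TForm.closure L' C)) :
    QoS4t (TForm.closure L C) := by
  obtain ⟨R, hR⟩ := List.exists_perm_append_of_subset hL hLL'
  have hLR : QoS4t (TForm.closure L (TForm.closure R C)) := by
    rw [← TForm.closure_append_s14]
    exact closure_of_perm hR h
  have hdisj := List.disjoint_of_nodup_append (hR.nodup_iff.mp hL')
  refine closure_mono L (closure_imp_of_forall_not_mem R fun v hv => ?_) hLR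
  exact hfree v (hR.symm.subset (List.mem_append_right L hv)) fun hvL => hdisj hvL hv

end QoS4t

/-- If `∀x̄ (A → B)^t` and `∀ȳ A^t` are provable in Q∘S4.t, where `x̄, ȳ, z̄` are
the lists of free variables of `A → B`, `A`, `B` respectively, then `∀z̄ B^t` is
provable in Q∘S4.t. -/
theorem closure_translation_mp (A B : IForm) (xs ys zs : List ℕ)
    (hndx : xs.Nodup) (hfvx : xs.toFinset = (IForm.impl A B).freeVars)
    (hndy : ys.Nodup) (hfvy : ys.toFinset = A.freeVars)
    (hndz : zs.Nodup) (hfvz : zs.toFinset = B.freeVars)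
    (h1 : QoS4t (TForm.closure xs (IForm.impl A B).t))
    (h2 : QoS4t (TForm.closure ys A.t)) :
    QoS4t (TForm.closure zs B.t) := by
  have hmem_xs : ∀ v, v ∈ A.freeVars ∨ v ∈ B.freeVars → v ∈ xs := fun v hv => by
    rw [← List.mem_toFinset, hfvx]
    exact Finset.mem_union.mpr hv
  have hys : ys ⊆ xs := fun v hv => hmem_xs v (.inl (hfvy ▸ List.mem_toFinset.mpr hv))
  have hzs : zs ⊆ xs := fun v hv => hmem_xs v (.inr (hfvz ▸ List.mem_toFinset.mpr hv))
  have himp : QoS4t (TForm.closure xs (A.t.impl B.t)) :=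
    QoS4t.closure_mono xs (QoS4t.boxF_imp _) h1
  have hB : QoS4t (TForm.closure xs B.t) :=
    QoS4t.closure_mp himp (QoS4t.closure_of_subset hndy hys h2)
  refine QoS4t.closure_of_superset_of_not_mem_freeVars hndx hndz hzs (fun v _ hv => ?_) hB
  rwa [IForm.freeVars_t, ← hfvz, List.mem_toFinset]
end

section
/- For every formula A of L in which x is free and y is substitutable for x (x does not occur in the scope of ∀y or ∃y), the formula ∀y □_F(□_F ∀x A^t → A(y/x)^t) is provable in Q∘S4.t. -/
lemma S4t.imp_trans_s17 {A B C : BForm} (h1 : S4t (A.impl B)) (h2 : S4t (B.impl C)) :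
    S4t (A.impl C) :=
  S4t.mp _ _ (S4t.mp _ _ (S4t.ax2 A B C) (S4t.mp _ _ (S4t.ax1 (B.impl C) A) h2)) h1

lemma S4t.discharge {A B C : BForm} (h1 : S4t (A.impl (B.impl C))) (h2 : S4t B) :
    S4t (A.impl C) :=
  S4t.mp _ _ (S4t.mp _ _ (S4t.ax2 A B C) h1) (S4t.mp _ _ (S4t.ax1 B A) h2)

lemma S4t.key (p q : BForm) :
    S4t (((p.impl q).boxF).impl ((p.boxF.impl q).boxF)) := by
  have c : S4t ((p.impl q).impl (p.boxF.impl q)) :=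
    S4t.discharge (S4t.imp_trans_s17 (S4t.ax1 (p.impl q) p.boxF) (S4t.ax2 p.boxF p q)) (S4t.tF p)
  exact S4t.mp _ _ (S4t.kF _ _) (S4t.necF _ c)

lemma QoS4t.key (E C : TForm) :
    QoS4t ((E.impl C).boxF.impl ((E.boxF.impl C).boxF)) := by
  have h := QoS4t.s4t _ (fun n => if n = 0 then E else C) (S4t.key (.var 0) (.var 1))
  simpa [BForm.tsubst] using h

lemma IForm.t_subst (A : IForm) (x y : ℕ) : (A.subst x y).t = A.t.subst x y := by
  induction A with
  | all z B ih =>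
      simp only [IForm.subst]
      split_ifs with h <;>
        simp [IForm.t, TForm.subst, h, ih]
  | ex z B ih =>
      simp only [IForm.subst]
      split_ifs with h <;>
        simp [IForm.t, TForm.ex, TForm.diaP, TForm.neg, TForm.subst, h, ih]
  | _ =>
      simp [IForm.t, IForm.subst, TForm.subst, TForm.and, TForm.or, TForm.neg, *]

lemma IForm.substOK_t_s17 (A : IForm) (x y : ℕ) (h : A.substOK x y) : A.t.substOK x y := by
  induction A with
  | all z B ih =>
      rcases h with h | ⟨h1, h2⟩
      · exact Or.inl h
      · exact Or.inr ⟨by simpa [IForm.freeVars_t] using h1, ih h2⟩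
  | ex z B ih =>
      rcases h with h | ⟨h1, h2⟩
      · simp [IForm.t, TForm.diaP, TForm.ex, TForm.neg, TForm.substOK, h]
      · simp only [IForm.t, TForm.diaP, TForm.ex, TForm.neg, TForm.substOK, and_true]
        refine Or.inr ⟨?_, ih h2⟩
        intro hy
        simpa [TForm.freeVars, IForm.freeVars_t] using h1 hy
  | and B C ihB ihC =>
      obtain ⟨h1, h2⟩ := h
      simp only [IForm.t, TForm.and, TForm.neg, TForm.substOK, and_true]
      exact ⟨ihB h1, ihC h2⟩
  | or B C ihB ihC =>
      obtain ⟨h1, h2⟩ := h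
      simp only [IForm.t, TForm.or, TForm.neg, TForm.substOK, and_true]
      exact ⟨ihB h1, ihC h2⟩
  | impl B C ihB ihC =>
      obtain ⟨h1, h2⟩ := h
      exact ⟨ihB h1, ihC h2⟩
  | falsum => trivial
  | atom => trivial

/-- For every formula `A` of `L` in which `x` is free and `y` is substitutable
for `x`, the formula `∀y □F(□F ∀x A^t → A(y/x)^t)` is provable in Q∘S4.t. -/
theorem all_boxF_ui_provable (A : IForm) (x y : ℕ)
    (hx : x ∈ A.freeVars) (hok : A.substOK x y) :
    QoS4t (TForm.all y (TForm.boxF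
      ((TForm.boxF (TForm.all x A.t)).impl (A.subst x y).t))) := by
  have hokt : A.t.substOK x y := IForm.substOK_t_s17 A x y hok
  have h1 : QoS4t (.all y ((TForm.all x A.t).impl (A.t.subst x y))) :=
    QoS4t.ui x y A.t hokt
  have h3 : QoS4t (.all y (((TForm.all x A.t).impl (A.t.subst x y)).boxF)) :=
    QoS4t.mp _ _ (QoS4t.cbfF y _) (QoS4t.necF _ h1)
  have h4 := QoS4t.key (TForm.all x A.t) (A.t.subst x y)
  have h6 := QoS4t.mp _ _ (QoS4t.distrib y _ _) (QoS4t.gen y _ h4)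
  have h7 := QoS4t.mp _ _ h6 h3
  rw [IForm.t_subst]
  exact h7
end
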